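/- arXiv:1508.00079 — 4 statements merged into one kernel-verified Lean document; each statement's English description precedes it below -/
import Mathlib

section
/- Let M be a matching in a graph G and let C1 and C2 be two vertex-disjoint odd cycles in G such that in each Ci exactly one vertex is uncovered by M and every edge of M incident to a vertex of Ci is an edge of Ci (i.e., C1 and C2 are fully matched odd cycles). If there exists an edge of G joining a vertex of C1 to a vertex of C2, then G contains a matching of size |M| + 1. -/
/-!
Discard the edges of `M` that meet the two cycles and put in their place the edge `ab` together
with perfect matchings of `C₁ - a` and `C₂ - b` (an odd cycle minus a vertex is a path with an even
number of vertices). Edges of `M` meeting a cycle stay inside it, so the result is again a matching;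
it covers the vertices covered by `M` plus the two vertices the cycles left uncovered, hence it has
exactly one edge more.
-/

open SimpleGraph

/-- An odd cycle `c` is *fully matched* with respect to a matching `M`:
exactly one vertex of `c` is uncovered by `M`, and every edge of `M`
incident to a vertex of `c` is an edge of `c`. -/
def FullyMatched {V : Type*} {G : SimpleGraph V} (M : G.Subgraph) {x : V}
    (c : G.Walk x x) : Prop :=
  (∃! v, v ∈ c.support ∧ v ∉ M.verts) ∧
  (∀ e ∈ M.edgeSet, (∃ w ∈ c.support, w ∈ e) → e ∈ c.edges)

namespace SimpleGraph.Subgraph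

variable {V : Type*} {G : SimpleGraph V} {M N : G.Subgraph}

lemma IsMatching.ncard_verts [Finite V] (hM : M.IsMatching) :
    M.verts.ncard = 2 * M.edgeSet.ncard := by
  classical
  have := Fintype.ofFinite V
  have hedges : M.edgeSet.ncard = M.coe.edgeFinset.card := by
    rw [← image_coe_edgeSet_coe, ← coe_edgeFinset,
      Set.ncard_image_of_injective _ (Sym2.map.injective Subtype.val_injective),
      Set.ncard_coe_finset]
  have hdeg : ∀ v : M.verts, M.coe.degree v = 1 := fun v => by
    rw [coe_degree]; convert (isMatching_iff_forall_degree.mp hM) v v.2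
  rw [hedges, ← M.coe.sum_degrees_eq_twice_card_edges, ← Nat.card_coe_set_eq,
    Nat.card_eq_fintype_card, Fintype.card_eq_sum_ones]
  exact Finset.sum_congr rfl fun v _ => by convert (hdeg v).symm

lemma IsMatching.sup_of_disjoint_verts (hM : M.IsMatching) (hN : N.IsMatching)
    (h : Disjoint M.verts N.verts) : (M ⊔ N).IsMatching :=
  hM.sup hN (by rwa [hM.support_eq_verts, hN.support_eq_verts])

lemma IsMatching.deleteVerts {S : Set V} (hM : M.IsMatching)
    (hS : ∀ ⦃v w⦄, M.Adj v w → v ∈ S → w ∈ S) : (M.deleteVerts S).IsMatching := by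
  rintro v ⟨hvM, hvS⟩
  obtain ⟨w, hvw, huniq⟩ := hM hvM
  exact ⟨w, deleteVerts_adj.mpr ⟨hvM, hvS, hvw.snd_mem, fun hwS => hvS (hS hvw.symm hwS), hvw⟩,
    fun y hy => huniq y (deleteVerts_adj.mp hy).2.2.2.2⟩

lemma IsMatching.deleteVerts_sup {S : Set V} (hM : M.IsMatching)
    (hS : ∀ ⦃v w⦄, M.Adj v w → v ∈ S → w ∈ S) (hN : N.IsMatching) (hNS : N.verts ⊆ S) :
    (M.deleteVerts S ⊔ N).IsMatching :=
  (hM.deleteVerts hS).sup_of_disjoint_verts hN (Set.disjoint_sdiff_left.mono_right hNS)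

lemma exists_isMatching_verts_eq_union_of_adj {s t : Set V} {a b : V} (hst : Disjoint s t)
    (ha : a ∈ s) (hb : b ∈ t) (hab : G.Adj a b)
    (hs : ∃ N : G.Subgraph, N.IsMatching ∧ N.verts = s \ {a})
    (ht : ∃ N : G.Subgraph, N.IsMatching ∧ N.verts = t \ {b}) :
    ∃ N : G.Subgraph, N.IsMatching ∧ N.verts = s ∪ t := by
  obtain ⟨N₁, hN₁, hN₁verts⟩ := hs
  obtain ⟨N₂, hN₂, hN₂verts⟩ := ht
  refine ⟨G.subgraphOfAdj hab ⊔ (N₁ ⊔ N₂), (IsMatching.subgraphOfAdj hab).sup_of_disjoint_verts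
    (hN₁.sup_of_disjoint_verts hN₂ ?_) ?_, ?_⟩
  · rw [hN₁verts, hN₂verts]
    exact hst.mono Set.sdiff_subset Set.sdiff_subset
  · simp only [verts_sup, subgraphOfAdj_verts, hN₁verts, hN₂verts, Set.disjoint_insert_left,
      Set.disjoint_singleton_left]
    grind
  · simp only [verts_sup, subgraphOfAdj_verts, hN₁verts, hN₂verts]
    ext v
    grind

end SimpleGraph.Subgraph

namespace SimpleGraph.Walk

variable {V : Type*} {G : SimpleGraph V}

-- A path with an even number of edges is matched except for its first vertex; the two parity
-- cases feed each other in the induction.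
lemma IsPath.exists_isMatching {u v : V} {p : G.Walk u v} (hp : p.IsPath) :
    (Odd p.length → ∃ N : G.Subgraph, N.IsMatching ∧ N.verts = {w | w ∈ p.support}) ∧
    (Even p.length → ∃ N : G.Subgraph, N.IsMatching ∧ N.verts = {w | w ∈ p.support} \ {u}) := by
  induction p with
  | nil => exact ⟨fun h => absurd h (by simp), fun _ => ⟨⊥, fun _ h => h.elim, by simp⟩⟩
  | @cons u w v huw q ih =>
    rw [cons_isPath_iff] at hp
    obtain ⟨hoddq, hevenq⟩ := ih hp.1
    refine ⟨fun hodd => ?_, fun heven => ?_⟩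
    · obtain ⟨N, hN, hNverts⟩ := hevenq (by simpa [Nat.odd_add_one] using hodd)
      refine ⟨G.subgraphOfAdj huw ⊔ N,
        (Subgraph.IsMatching.subgraphOfAdj huw).sup_of_disjoint_verts hN ?_, ?_⟩
      · rw [hNverts, subgraphOfAdj_verts, Set.disjoint_insert_left, Set.disjoint_singleton_left]
        exact ⟨fun h => hp.2 h.1, fun h => h.2 rfl⟩
      · ext x
        simp only [Subgraph.verts_sup, subgraphOfAdj_verts, hNverts, support_cons]
        grind [start_mem_support]
    · obtain ⟨N, hN, hNverts⟩ := hoddq (by simpa [Nat.even_add_one] using heven)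
      refine ⟨N, hN, ?_⟩
      ext x
      simp only [hNverts, support_cons]
      grind [start_mem_support]

lemma IsCycle.exists_isMatching_verts_eq_diff {x a : V} {c : G.Walk x x} (hc : c.IsCycle)
    (hodd : Odd c.length) (ha : a ∈ c.support) :
    ∃ N : G.Subgraph, N.IsMatching ∧ N.verts = {v | v ∈ c.support} \ {a} := by
  classical
  obtain ⟨b, hab, q, hrot⟩ := not_nil_iff.mp (hc.rotate ha).not_nil
  have hsupp : ∀ v, v ∈ c.support ↔ v = a ∨ v ∈ q.support := fun v => by
    rw [← mem_support_rotate_iff c a ha, hrot, support_cons, List.mem_cons]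
  have hlen : q.length + 1 = c.length := by
    rw [← length_rotate c a ha, hrot, length_cons]
  have hq : q.IsPath := ((cons_isCycle_iff q hab).mp (hrot ▸ hc.rotate ha)).1
  obtain ⟨N, hN, hNverts⟩ := hq.reverse.exists_isMatching.2
    (by rw [length_reverse]; grind)
  refine ⟨N, hN, ?_⟩
  ext v
  simp only [hNverts, support_reverse, List.mem_reverse, Set.mem_sdiff, Set.mem_ofPred_eq, hsupp]
  grind

end SimpleGraph.Walk

namespace FullyMatched

variable {V : Type*} {G : SimpleGraph V} {M : G.Subgraph} {x : V} {c : G.Walk x x}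

lemma mem_support_of_adj (h : FullyMatched M c) {v w : V} (hvw : M.Adj v w)
    (hv : v ∈ c.support) : w ∈ c.support :=
  c.snd_mem_support_of_mem_edges (h.2 _ hvw ⟨v, hv, Sym2.mem_mk_left v w⟩)

lemma exists_union_eq_insert (h : FullyMatched M c) :
    ∃ u ∈ c.support, u ∉ M.verts ∧ M.verts ∪ {v | v ∈ c.support} = insert u M.verts := by
  obtain ⟨u, ⟨hu, huM⟩, huniq⟩ := h.1
  refine ⟨u, hu, huM, ?_⟩
  ext v
  simp only [Set.mem_union, Set.mem_ofPred_eq, Set.mem_insert_iff]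
  grind

end FullyMatched

/-- If two vertex-disjoint fully matched odd cycles are joined by an
edge of `G`, then `G` has a matching with one more edge than `M`. -/
theorem stmt2 {V : Type*} [Fintype V] (G : SimpleGraph V)
    (M : G.Subgraph) (hM : M.IsMatching)
    {x₁ x₂ : V} (c₁ : G.Walk x₁ x₁) (c₂ : G.Walk x₂ x₂)
    (hc₁ : c₁.IsCycle) (hc₂ : c₂.IsCycle)
    (hodd₁ : Odd c₁.length) (hodd₂ : Odd c₂.length)
    (hdisj : Disjoint {v | v ∈ c₁.support} {v | v ∈ c₂.support})
    (hfm₁ : FullyMatched M c₁) (hfm₂ : FullyMatched M c₂)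
    (hjoin : ∃ a ∈ c₁.support, ∃ b ∈ c₂.support, G.Adj a b) :
    ∃ M' : G.Subgraph, M'.IsMatching ∧ M'.edgeSet.ncard = M.edgeSet.ncard + 1 := by
  obtain ⟨a, ha, b, hb, hab⟩ := hjoin
  set S := {v | v ∈ c₁.support} ∪ {v | v ∈ c₂.support}
  obtain ⟨N, hN, hNverts⟩ := Subgraph.exists_isMatching_verts_eq_union_of_adj hdisj ha hb hab
    (hc₁.exists_isMatching_verts_eq_diff hodd₁ ha) (hc₂.exists_isMatching_verts_eq_diff hodd₂ hb)
  have hS : ∀ ⦃v w⦄, M.Adj v w → v ∈ S → w ∈ S := by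
    rintro v w hvw (hv | hv)
    exacts [Or.inl (hfm₁.mem_support_of_adj hvw hv), Or.inr (hfm₂.mem_support_of_adj hvw hv)]
  have hM' := hM.deleteVerts_sup hS hN hNverts.le
  obtain ⟨u₁, hu₁, hu₁M, hcov₁⟩ := hfm₁.exists_union_eq_insert
  obtain ⟨u₂, hu₂, hu₂M, hcov₂⟩ := hfm₂.exists_union_eq_insert
  have hverts : (M.deleteVerts S ⊔ N).verts = insert u₁ (insert u₂ M.verts) := by
    rw [Subgraph.verts_sup, Subgraph.deleteVerts_verts, hNverts, Set.sdiff_union_self,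
      ← Set.union_assoc, hcov₁, Set.insert_union, hcov₂]
  have hu₁₂ : u₁ ∉ insert u₂ M.verts := by
    rintro (rfl | h)
    exacts [hdisj.notMem_of_mem_left hu₁ hu₂, hu₁M h]
  have hcard := hM'.ncard_verts
  rw [hverts, Set.ncard_insert_of_notMem hu₁₂, Set.ncard_insert_of_notMem hu₂M,
    hM.ncard_verts] at hcard
  exact ⟨_, hM', by omega⟩
end

section
/- Let M be a maximum matching of a graph G and let C1 and C2 be vertex-disjoint fully matched odd cycles whose unique M-unsaturated-within-cycle vertices are the two vertices of G uncovered by M. Then there is no M-alternating path between the two uncovered vertices, and in particular there is no edge of G between C1 and C2. -/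
/-!
An `M`-alternating path between the two uncovered vertices would be augmenting: exchanging the
matched and unmatched edges along it gives a matching with one more edge. On a fully matched
cycle through an uncovered vertex `a` the matched edges are exactly the odd-numbered ones, so
every vertex of the cycle is reached from `a` by an even alternating path along one of the two
arcs. An edge `xy` between the two cycles is unmatched, so it joins two such paths into an
alternating path from `a` to `b`.
-/

open SimpleGraph

def IsAltPath {V : Type*} {G : SimpleGraph V} (M : G.Subgraph) {u w : V}
    (p : G.Walk u w) : Prop :=
  p.IsPath ∧ ∀ i, i < p.length → (p.edges.getD i (Sym2.diag u) ∈ M.edgeSet ↔ Odd i)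

section

variable {V : Type*} {G : SimpleGraph V} {M : G.Subgraph}

def EdgesAlternate (M : G.Subgraph) (l : List (Sym2 V)) : Prop :=
  ∀ i (hi : i < l.length), (l[i] ∈ M.edgeSet ↔ Odd i)

namespace EdgesAlternate

variable {l l₁ l₂ : List (Sym2 V)}

lemma take (h : EdgesAlternate M l) (n : ℕ) : EdgesAlternate M (l.take n) := fun i hi => by
  simpa using h i (by simp only [List.length_take, lt_inf_iff] at hi; omega)

lemma append (h₁ : EdgesAlternate M l₁) (hl₁ : Even l₁.length)
    (h₂ : EdgesAlternate M l₂) : EdgesAlternate M (l₁ ++ l₂) := by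
  intro i hi
  rw [List.getElem_append]
  split_ifs with h
  · exact h₁ i h
  · rw [h₂ _ (by simp only [List.length_append] at hi; omega), Nat.odd_sub (by omega)]
    simp [hl₁]

lemma cons_reverse {e : Sym2 V} (he : e ∉ M.edgeSet) (h : EdgesAlternate M l)
    (hl : Even l.length) : EdgesAlternate M (e :: l.reverse) := by
  rintro (_ | i) hi
  · simpa using he
  · simp only [List.length_cons, List.length_reverse] at hi
    rw [List.getElem_cons_succ, List.getElem_reverse, h _ (by omega)]
    grind [Nat.even_add_one, Nat.even_sub]

lemma length_filter_mem [DecidablePred (· ∈ M.edgeSet)] :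
    ∀ {l : List (Sym2 V)}, EdgesAlternate M l →
      (l.filter (· ∈ M.edgeSet)).length = l.length / 2
  | [], _ => by simp
  | [e], h => by simpa using h 0
  | e₀ :: e₁ :: l, h => by
    have hl : EdgesAlternate M l := fun i hi => by
      have := h (i + 2) (by simp only [List.length_cons]; omega)
      simp only [List.getElem_cons_succ] at this
      simpa [Nat.odd_add] using this
    have h₀ : e₀ ∉ M.edgeSet := by simpa using h 0
    have h₁ : e₁ ∈ M.edgeSet := by simpa using h 1
    rw [List.filter_cons_of_neg (by simpa using h₀),
      List.filter_cons_of_pos (by simpa using h₁), List.length_cons, length_filter_mem hl]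
    simp only [List.length_cons]
    omega

end EdgesAlternate

lemma List.Nodup.ncard_setOf_mem {α : Type*} {l : List α} (h : l.Nodup) :
    {x | x ∈ l}.ncard = l.length := by
  classical
  rw [show {x | x ∈ l} = (l.toFinset : Set α) by ext; simp, Set.ncard_coe_finset,
    List.toFinset_card_of_nodup h]

lemma isAltPath_iff {u v : V} {p : G.Walk u v} :
    IsAltPath M p ↔ p.IsPath ∧ EdgesAlternate M p.edges := by
  refine and_congr_right fun _ => ⟨fun h i hi => ?_, fun h i hi => ?_⟩
  · rw [← List.getD_eq_getElem _ (Sym2.diag u) hi]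
    exact h i (by simpa using hi)
  · rw [List.getD_eq_getElem _ _ (by simpa using hi)]
    exact h i _

namespace SimpleGraph

namespace Walk

variable {u v x w : V}

lemma edgesAlternate_edges_iff {p : G.Walk u v} : EdgesAlternate M p.edges ↔
    ∀ i < p.length, (M.Adj (p.getVert i) (p.getVert (i + 1)) ↔ Odd i) := by
  simp [EdgesAlternate, getElem_edges]

lemma odd_length_of_edgesAlternate {p : G.Walk u v} (h : EdgesAlternate M p.edges)
    (hv : v ∉ M.verts) (hp : ¬ p.Nil) : Odd p.length := by
  have hpos := not_nil_iff_lt_length.mp hp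
  have hlast := edgesAlternate_edges_iff.mp h (p.length - 1) (by omega)
  rw [Nat.sub_add_cancel hpos, getVert_length] at hlast
  have : ¬ Odd (p.length - 1) := hlast.not.mp fun hM => hv (M.edge_vert hM.symm)
  grind

lemma IsPath.toSubgraph_adj_getVert_iff {p : G.Walk u v} (hp : p.IsPath) {i : ℕ}
    (hi : i ≤ p.length) :
    p.toSubgraph.Adj (p.getVert i) w ↔
      (i < p.length ∧ w = p.getVert (i + 1)) ∨ (0 < i ∧ w = p.getVert (i - 1)) := by
  have hinj {j k : ℕ} (hj : j ≤ p.length) (hk : k ≤ p.length)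
      (h : p.getVert j = p.getVert k) : j = k :=
    hp.getVert_injOn hj hk h
  constructor
  · intro h
    obtain ⟨j, hj, hjl⟩ := (toSubgraph_adj_iff _).mp h
    rcases Sym2.eq_iff.mp hj with ⟨h1, h2⟩ | ⟨h1, h2⟩
    · obtain rfl := hinj (by omega) hi h1
      exact Or.inl ⟨hjl, h2.symm⟩
    · obtain rfl := hinj (by omega) hi h2
      exact Or.inr ⟨by omega, by simpa using h1.symm⟩
  · rintro (⟨hlt, rfl⟩ | ⟨hpos, rfl⟩)
    · exact p.toSubgraph_adj_getVert hlt
    · have h := p.toSubgraph_adj_getVert (i := i - 1) (by omega)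
      rw [Nat.sub_add_cancel hpos] at h
      exact h.symm

structure IsAugmenting (M : G.Subgraph) (p : G.Walk u v) : Prop where
  isPath : p.IsPath
  edgesAlternate : EdgesAlternate M p.edges
  start_notMem : u ∉ M.verts
  end_notMem : v ∉ M.verts
  ne : u ≠ v

variable {a : V} {c : G.Walk a a}

lemma IsCycle.exists_even_alternating_subpath (hc : c.IsCycle) (halt : EdgesAlternate M c.edges)
    {i : ℕ} (hi : Even i) (hlt : i < c.length) (hx : c.getVert i = x) :
    ∃ q : G.Walk a x, q.IsPath ∧ Even q.length ∧ q.support ⊆ c.support ∧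
      EdgesAlternate M q.edges := by
  subst hx
  refine ⟨c.take i, hc.isPath_take hlt, by simpa [hlt.le] using hi, ?_, ?_⟩
  · rw [support_take]
    exact List.take_subset _ _
  · rw [edges_take]
    exact halt.take i

end Walk

namespace Subgraph

def augment (M : G.Subgraph) {u v : V} (p : G.Walk u v) : G.Subgraph :=
  M.deleteEdges p.edgeSet ⊔ p.toSubgraph.deleteEdges M.edgeSet

lemma augment_adj {u v x w : V} {p : G.Walk u v} : (M.augment p).Adj x w ↔
    M.Adj x w ∧ ¬ p.toSubgraph.Adj x w ∨ p.toSubgraph.Adj x w ∧ ¬ M.Adj x w := by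
  simp [augment, Walk.edgeSet, Walk.adj_toSubgraph_iff_mem_edges]

lemma edgeSet_augment {u v : V} {p : G.Walk u v} :
    (M.augment p).edgeSet = (M.edgeSet \ p.edgeSet) ∪ (p.edgeSet \ M.edgeSet) := by
  ext e
  induction e using Sym2.ind
  simp [augment, Walk.edgeSet, Walk.adj_toSubgraph_iff_mem_edges]

end Subgraph

namespace Walk.IsAugmenting

variable {u v x w : V} {p : G.Walk u v}

lemma odd_length (hp : p.IsAugmenting M) : Odd p.length :=
  odd_length_of_edgesAlternate hp.edgesAlternate hp.end_notMem fun h => hp.ne h.eq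

lemma toSubgraph_adj_of_adj (hp : p.IsAugmenting M) (hM : M.IsMatching) (hx : x ∈ p.support)
    (hxw : M.Adj x w) : p.toSubgraph.Adj x w := by
  have halt := edgesAlternate_edges_iff.mp hp.edgesAlternate
  obtain ⟨i, rfl, hi⟩ := mem_support_iff_exists_getVert.mp hx
  have h0 : i ≠ 0 := by
    rintro rfl
    exact hp.start_notMem (by simpa using M.edge_vert hxw)
  have hlen : i ≠ p.length := by
    rintro rfl
    exact hp.end_notMem (by simpa using M.edge_vert hxw)
  rw [hp.isPath.toSubgraph_adj_getVert_iff hi]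
  rcases Nat.even_or_odd i with hev | hodd
  · have hprev := (halt (i - 1) (by omega)).mpr (by grind)
    rw [Nat.sub_add_cancel (by omega)] at hprev
    exact Or.inr ⟨by omega, hM.eq_of_adj_left hxw hprev.symm⟩
  · exact Or.inl ⟨by omega, hM.eq_of_adj_left hxw ((halt i (by omega)).mpr hodd)⟩

lemma existsUnique_toSubgraph_adj_not_adj (hp : p.IsAugmenting M) {i : ℕ} (hi : i ≤ p.length) :
    ∃! w, p.toSubgraph.Adj (p.getVert i) w ∧ ¬ M.Adj (p.getVert i) w := by
  have halt := edgesAlternate_edges_iff.mp hp.edgesAlternate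
  have hodd := hp.odd_length
  simp only [hp.isPath.toSubgraph_adj_getVert_iff hi]
  rcases Nat.even_or_odd i with hev | hodd'
  · have hlt : i < p.length := by grind
    refine ⟨p.getVert (i + 1), ⟨Or.inl ⟨hlt, rfl⟩, (halt i hlt).not.mpr (by grind)⟩, ?_⟩
    rintro w ⟨⟨-, rfl⟩ | ⟨hpos, rfl⟩, hw⟩
    · rfl
    · have hprev := (halt (i - 1) (by omega)).mpr (by grind)
      rw [Nat.sub_add_cancel hpos] at hprev
      exact absurd hprev.symm hw
  · have hpos : 0 < i := hodd'.pos
    refine ⟨p.getVert (i - 1), ⟨Or.inr ⟨hpos, rfl⟩, fun h => ?_⟩, ?_⟩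
    · have hprev := (halt (i - 1) (by omega)).not.mpr (by grind)
      rw [Nat.sub_add_cancel hpos] at hprev
      exact hprev h.symm
    · rintro w ⟨⟨hlt, rfl⟩ | ⟨-, rfl⟩, hw⟩
      · exact absurd ((halt i hlt).mpr hodd') hw
      · rfl

lemma isMatching_augment (hp : p.IsAugmenting M) (hM : M.IsMatching) :
    (M.augment p).IsMatching := by
  intro x hx
  by_cases hxp : x ∈ p.support
  · obtain ⟨i, rfl, hi⟩ := mem_support_iff_exists_getVert.mp hxp
    have hadj (w : V) : (M.augment p).Adj (p.getVert i) w ↔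
        p.toSubgraph.Adj (p.getVert i) w ∧ ¬ M.Adj (p.getVert i) w := by
      have := hp.toSubgraph_adj_of_adj hM hxp (w := w)
      rw [Subgraph.augment_adj]
      tauto
    simpa only [hadj] using hp.existsUnique_toSubgraph_adj_not_adj hi
  · have hxM : x ∈ M.verts := by
      simpa [Subgraph.augment, hxp] using hx
    have hP : ∀ w, ¬ p.toSubgraph.Adj x w := fun w h => hxp (p.mem_support_of_adj_toSubgraph h)
    simpa [Subgraph.augment_adj, hP] using hM hxM

lemma ncard_edgeSet_augment (hp : p.IsAugmenting M) (hfin : M.edgeSet.Finite) :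
    (M.augment p).edgeSet.ncard = M.edgeSet.ncard + 1 := by
  classical
  -- `p` has `2k + 1` edges, `k` of them in `M`.
  have hS : p.edgeSet.ncard = p.length := by
    rw [edgeSet, hp.isPath.edges_nodup.ncard_setOf_mem, length_edges]
  have hSM : (p.edgeSet ∩ M.edgeSet).ncard = p.length / 2 := by
    rw [show p.edgeSet ∩ M.edgeSet = {e | e ∈ p.edges.filter (· ∈ M.edgeSet)} by
        ext; simp [edgeSet],
      (hp.isPath.edges_nodup.filter _).ncard_setOf_mem, hp.edgesAlternate.length_filter_mem,
      length_edges]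
  have hSfin : p.edgeSet.Finite := p.edges.finite_toSet
  have hsplitS := Set.ncard_inter_add_ncard_sdiff_eq_ncard p.edgeSet M.edgeSet hSfin
  have hsplitM := Set.ncard_inter_add_ncard_sdiff_eq_ncard M.edgeSet p.edgeSet hfin
  rw [Subgraph.edgeSet_augment, Set.ncard_union_eq disjoint_sdiff_sdiff hfin.sdiff hSfin.sdiff]
  rw [Set.inter_comm] at hsplitM
  obtain ⟨k, hk⟩ := hp.odd_length
  omega

lemma exists_isMatching_ncard_gt [Finite V] (hp : p.IsAugmenting M) (hM : M.IsMatching) :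
    ∃ M' : G.Subgraph, M'.IsMatching ∧ M.edgeSet.ncard < M'.edgeSet.ncard :=
  ⟨M.augment p, hp.isMatching_augment hM,
    by rw [hp.ncard_edgeSet_augment (Set.toFinite _)]; omega⟩

end Walk.IsAugmenting

end SimpleGraph

open SimpleGraph Walk

namespace FullyMatched

variable {a x v : V} {c : G.Walk a a}

lemma reverse (h : FullyMatched M c) : FullyMatched M c.reverse := by
  simpa [FullyMatched] using h

lemma mem_verts (h : FullyMatched M c) (ha : a ∉ M.verts) (hv : v ∈ c.support) (hva : v ≠ a) :
    v ∈ M.verts := by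
  by_contra hvM
  obtain ⟨_, -, huniq⟩ := h.1
  exact hva ((huniq v ⟨hv, hvM⟩).trans (huniq a ⟨c.start_mem_support, ha⟩).symm)

lemma adj_getVert_sub_one_iff (h : FullyMatched M c) (hM : M.IsMatching) (ha : a ∉ M.verts)
    (hc : c.IsCycle) {i : ℕ} (h0 : i ≠ 0) (hi : i < c.length) :
    M.Adj (c.getVert i) (c.getVert (i - 1)) ↔ ¬ M.Adj (c.getVert i) (c.getVert (i + 1)) := by
  have hne : c.getVert i ≠ a := by
    rw [Ne, hc.getVert_endpoint_iff hi.le]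
    omega
  obtain ⟨w, hw, -⟩ := hM (h.mem_verts ha (c.getVert_mem_support i) hne)
  have hcw : c.toSubgraph.Adj (c.getVert i) w := adj_toSubgraph_iff_mem_edges.mpr
    (h.2 _ hw ⟨_, c.getVert_mem_support i, Sym2.mem_mk_left _ _⟩)
  have hw' : w = c.getVert (i - 1) ∨ w = c.getVert (i + 1) := by
    simpa [← Subgraph.mem_neighborSet, hc.neighborSet_toSubgraph_internal h0 hi] using hcw
  constructor
  · intro h₁ h₂
    exact hc.getVert_sub_one_ne_getVert_add_one hi.le (hM.eq_of_adj_left h₁ h₂)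
  · intro h₂
    rcases hw' with rfl | rfl
    · exact hw
    · exact absurd hw h₂

lemma edgesAlternate (h : FullyMatched M c) (hM : M.IsMatching) (ha : a ∉ M.verts)
    (hc : c.IsCycle) : EdgesAlternate M c.edges := by
  rw [edgesAlternate_edges_iff]
  intro i hi
  induction i with
  | zero => simpa using fun h₀ => ha (M.edge_vert h₀)
  | succ i ih =>
    have hstep := h.adj_getVert_sub_one_iff hM ha hc (i := i + 1) (by omega) hi
    rw [Nat.add_sub_cancel, M.adj_comm, ih (by omega)] at hstep
    rw [Nat.odd_add_one]
    tauto

lemma exists_even_alternating_subpath (h : FullyMatched M c) (hM : M.IsMatching)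
    (ha : a ∉ M.verts) (hc : c.IsCycle) (hx : x ∈ c.support) :
    ∃ q : G.Walk a x, q.IsPath ∧ Even q.length ∧ q.support ⊆ c.support ∧
      EdgesAlternate M q.edges := by
  have halt := h.edgesAlternate hM ha hc
  have hodd := odd_length_of_edgesAlternate halt ha hc.not_nil
  obtain ⟨i, rfl, hi⟩ := mem_support_iff_exists_getVert.mp hx
  -- `c.getVert i` is `i` steps from `a` along `c` and `c.length - i` steps along `c.reverse`;
  -- since `c.length` is odd, one of the two is even.
  rcases Nat.even_or_odd i with hev | hodd'
  · exact hc.exists_even_alternating_subpath halt hev (by grind) rfl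
  · have hpos := hodd'.pos
    obtain ⟨q, hq, hev, hs, halt'⟩ := hc.reverse.exists_even_alternating_subpath
      (h.reverse.edgesAlternate hM ha hc.reverse) (i := c.length - i) (by grind)
      (by rw [length_reverse]; omega) (by rw [getVert_reverse, Nat.sub_sub_self hi])
    exact ⟨q, hq, hev, fun v hv => by simpa using hs hv, halt'⟩

end FullyMatched

lemma exists_isAltPath_of_adj {a b x y : V} {c₁ : G.Walk a a} {c₂ : G.Walk b b}
    (hM : M.IsMatching) (ha : a ∉ M.verts) (hb : b ∉ M.verts) (hc₁ : c₁.IsCycle)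
    (hc₂ : c₂.IsCycle) (hfm₁ : FullyMatched M c₁) (hfm₂ : FullyMatched M c₂)
    (hdisj : Disjoint {v | v ∈ c₁.support} {v | v ∈ c₂.support})
    (hx : x ∈ c₁.support) (hy : y ∈ c₂.support) (hxy : G.Adj x y) :
    ∃ p : G.Walk a b, IsAltPath M p := by
  obtain ⟨q₁, hq₁, hev₁, hs₁, halt₁⟩ :=
    hfm₁.exists_even_alternating_subpath hM ha hc₁ hx
  obtain ⟨q₂, hq₂, hev₂, hs₂, halt₂⟩ :=
    hfm₂.exists_even_alternating_subpath hM hb hc₂ hy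
  have hdisj' {v : V} (h₁ : v ∈ c₁.support) (h₂ : v ∈ c₂.support) : False :=
    Set.disjoint_left.mp hdisj h₁ h₂
  have hxy_notMem : s(x, y) ∉ M.edgeSet := fun h =>
    hdisj' (c₁.snd_mem_support_of_mem_edges (hfm₁.2 _ h ⟨x, hx, Sym2.mem_mk_left _ _⟩)) hy
  refine ⟨q₁.append (cons hxy q₂.reverse), isAltPath_iff.mpr ⟨IsPath.mk' ?_, ?_⟩⟩
  · rw [support_append, support_cons, List.tail_cons, support_reverse]
    refine hq₁.support_nodup.append (List.nodup_reverse.mpr hq₂.support_nodup) ?_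
    exact fun v h₁ h₂ => hdisj' (hs₁ h₁) (hs₂ (List.mem_reverse.mp h₂))
  · rw [edges_append, edges_cons, edges_reverse]
    exact halt₁.append (by simpa using hev₁)
      (halt₂.cons_reverse hxy_notMem (by simpa using hev₂))

end

theorem stmt5_general {V : Type*} [Fintype V] (G : SimpleGraph V)
    (M : G.Subgraph) (hM : M.IsMatching)
    (hmax : ∀ M' : G.Subgraph, M'.IsMatching → M'.edgeSet.ncard ≤ M.edgeSet.ncard)
    (a b : V) (hab : a ≠ b) (huncov : {v : V | v ∉ M.verts} = {a, b})
    (c₁ : G.Walk a a) (c₂ : G.Walk b b)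
    (hc₁ : c₁.IsCycle) (hc₂ : c₂.IsCycle)
    (hfm₁ : FullyMatched M c₁) (hfm₂ : FullyMatched M c₂)
    (hdisj : Disjoint {v | v ∈ c₁.support} {v | v ∈ c₂.support}) :
    (¬ ∃ p : G.Walk a b, IsAltPath M p) ∧
    (¬ ∃ x ∈ c₁.support, ∃ y ∈ c₂.support, G.Adj x y) := by
  have ha : a ∉ M.verts := (Set.ext_iff.mp huncov a).mpr (by simp)
  have hb : b ∉ M.verts := (Set.ext_iff.mp huncov b).mpr (by simp)
  have hno_alt : ¬ ∃ p : G.Walk a b, IsAltPath M p := by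
    rintro ⟨p, hp⟩
    obtain ⟨hpath, halt⟩ := isAltPath_iff.mp hp
    obtain ⟨M', hM', hlt⟩ :=
      (Walk.IsAugmenting.mk hpath halt ha hb hab).exists_isMatching_ncard_gt hM
    exact (hmax M' hM').not_gt hlt
  refine ⟨hno_alt, ?_⟩
  rintro ⟨x, hx, y, hy, hxy⟩
  exact hno_alt (exists_isAltPath_of_adj hM ha hb hc₁ hc₂ hfm₁ hfm₂ hdisj hx hy hxy)

/-- If `M` is a maximum matching whose two uncovered vertices lie on
vertex-disjoint fully matched odd cycles `c₁, c₂`, then there is no `M`-alternating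
path between the uncovered vertices and no edge of `G` between the cycles. -/
theorem stmt5 {V : Type*} [Fintype V] (G : SimpleGraph V)
    (M : G.Subgraph) (hM : M.IsMatching)
    (hmax : ∀ M' : G.Subgraph, M'.IsMatching → M'.edgeSet.ncard ≤ M.edgeSet.ncard)
    (a b : V) (hab : a ≠ b) (huncov : {v : V | v ∉ M.verts} = {a, b})
    (c₁ : G.Walk a a) (c₂ : G.Walk b b)
    (hc₁ : c₁.IsCycle) (hc₂ : c₂.IsCycle)
    (hodd₁ : Odd c₁.length) (hodd₂ : Odd c₂.length)
    (hfm₁ : FullyMatched M c₁) (hfm₂ : FullyMatched M c₂)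
    (hdisj : Disjoint {v | v ∈ c₁.support} {v | v ∈ c₂.support}) :
    (¬ ∃ p : G.Walk a b, IsAltPath M p) ∧
    (¬ ∃ x ∈ c₁.support, ∃ y ∈ c₂.support, G.Adj x y) :=
  stmt5_general G M hM hmax a b hab huncov c₁ c₂ hc₁ hc₂ hfm₁ hfm₂ hdisj
end

section
/- Every cycle of odd length contains three consecutive vertices u1, u2, u3 (in cycle order) whose degrees in an ambient graph G satisfy deg(u1) ≥ deg(u2) ≥ deg(u3). -/
/-!
Read the degrees around the cycle as a periodic sequence. If no three consecutive terms are
monotone, then whether the sequence goes up at step `i` must flip at every step, so the pattern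
repeats only with even period; but the sequence has the odd period `c.length`.
-/

open SimpleGraph

theorem Function.Periodic.exists_monotone_triple_of_odd {α : Type*} [LinearOrder α]
    {f : ℕ → α} {n : ℕ} (hf : Function.Periodic f n) (hn : Odd n) :
    ∃ i, (f (i + 1) ≤ f i ∧ f (i + 2) ≤ f (i + 1)) ∨
      (f i ≤ f (i + 1) ∧ f (i + 1) ≤ f (i + 2)) := by
  by_contra! h
  set S : ℕ → Prop := fun i ↦ f i < f (i + 1)
  have step (i : ℕ) : S (i + 1) ↔ ¬ S i := by
    obtain ⟨up, down⟩ := h i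
    simp only [S, not_lt]
    exact ⟨fun hS ↦ not_lt.1 fun hS' ↦ (down hS'.le).not_gt hS, up⟩
  have parity (i : ℕ) : S i ↔ (S 0 ↔ Even i) := by
    induction i with
    | zero => simp
    | succ k ih => rw [step, ih, Nat.even_add_one]; tauto
  have wrap : S n ↔ S 0 := by
    simp only [S, zero_add, hf.eq, add_comm n, hf 1]
  exact Nat.not_even_iff_odd.2 hn (by have := parity n; tauto)

namespace SimpleGraph.Walk

variable {V : Type*} {G : SimpleGraph V} {u : V}

def cycleVert (c : G.Walk u u) (i : ℕ) : V := c.getVert (i % c.length)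

theorem cycleVert_periodic (c : G.Walk u u) : Function.Periodic c.cycleVert c.length := by
  intro i
  simp [cycleVert]

theorem cycleVert_eq_getVert {c : G.Walk u u} {i j : ℕ} (hj : j ≤ c.length)
    (hij : i ≡ j [MOD c.length]) : c.cycleVert i = c.getVert j := by
  unfold cycleVert
  rw [hij]
  rcases hj.lt_or_eq with hj | rfl
  · rw [Nat.mod_eq_of_lt hj]
  · rw [Nat.mod_self, getVert_zero, getVert_length]

theorem mk_cycleVert_mem_edges (c : G.Walk u u) (hc : 0 < c.length) (i : ℕ) :
    s(c.cycleVert i, c.cycleVert (i + 1)) ∈ c.edges := by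
  have hi : i % c.length < c.length := Nat.mod_lt i hc
  rw [cycleVert_eq_getVert (j := i % c.length + 1) hi ((Nat.mod_modEq i _).symm.add_right 1)]
  exact (mk_mem_edges_iff_exists c).2 ⟨_, hi, rfl⟩

theorem IsCycle.cycleVert_eq_cycleVert_iff {c : G.Walk u u} (hc : c.IsCycle) {i j : ℕ} :
    c.cycleVert i = c.cycleVert j ↔ i ≡ j [MOD c.length] := by
  have hpos : 0 < c.length := by have := hc.three_le_length; omega
  refine ⟨fun h ↦ hc.getVert_injOn' ?_ ?_ h, fun h ↦ congrArg c.getVert h⟩ <;>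
    simpa using Nat.le_sub_one_of_lt (Nat.mod_lt _ hpos)

theorem IsCycle.cycleVert_ne_cycleVert_add_two {c : G.Walk u u} (hc : c.IsCycle) (i : ℕ) :
    c.cycleVert i ≠ c.cycleVert (i + 2) := by
  intro h
  have h02 : 0 % c.length = 2 % c.length :=
    Nat.ModEq.add_left_cancel' i (hc.cycleVert_eq_cycleVert_iff.1 h)
  have := hc.three_le_length
  rw [Nat.mod_eq_of_lt (by omega : 2 < c.length)] at h02
  simp at h02

end SimpleGraph.Walk

/-- Every odd cycle in a finite graph `G` has three consecutive vertices
`u₁, u₂, u₃` with `deg u₁ ≥ deg u₂ ≥ deg u₃`. -/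
theorem stmt6 {V : Type*} [Fintype V] (G : SimpleGraph V) [DecidableRel G.Adj]
    {x : V} (c : G.Walk x x) (hc : c.IsCycle) (hodd : Odd c.length) :
    ∃ u₁ u₂ u₃ : V, s(u₁, u₂) ∈ c.edges ∧ s(u₂, u₃) ∈ c.edges ∧ u₁ ≠ u₃ ∧
      G.degree u₂ ≤ G.degree u₁ ∧ G.degree u₃ ≤ G.degree u₂ := by
  have hpos : 0 < c.length := hodd.pos
  set v := c.cycleVert
  have edge (i : ℕ) : s(v i, v (i + 1)) ∈ c.edges := c.mk_cycleVert_mem_edges hpos i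
  obtain ⟨i, hdown | hup⟩ :=
    (c.cycleVert_periodic.comp fun w ↦ G.degree w).exists_monotone_triple_of_odd hodd
  · exact ⟨v i, v (i + 1), v (i + 2), edge i, edge (i + 1),
      hc.cycleVert_ne_cycleVert_add_two i, hdown⟩
  · exact ⟨v (i + 2), v (i + 1), v i, Sym2.eq_swap ▸ edge (i + 1), Sym2.eq_swap ▸ edge i,
      (hc.cycleVert_ne_cycleVert_add_two i).symm, hup.2, hup.1⟩
end

section
/- Kundu's theorem: A graphic sequence π = (d1, ..., dn) has a realization containing a k-factor if and only if the sequence π − k = (d1 − k, ..., dn − k) is graphic. -/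
/-!
If `H ≤ G` realize `π - k` and `π` respectively, then `G \ H` is a `k`-factor; so take
realizations `G` of `π` and `H` of `π - k` minimizing the number of edges of `H` outside `G`.
A two-switch (trading edges `pq, rs` for `pr, qs`) of `G` or of `H` preserves degrees, so
minimality forbids every switch that would lower that number. Write `D v` for the
`G \ H`-neighbourhood of `v`. If some edge `ab` of `H` is missing from `G`, with `a` carrying the
most such edges, the forbidden switches force every `z ∈ D b` to satisfy `z ∈ D a` and
`D z = {b} ∪ (D a \ {z})`. Applying this along a path `a, b, d, f, y` with `d ∈ D b`,
`df ∈ H \ G`, `y ∈ D f` gives a contradiction.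
-/

open SimpleGraph

/-- A sequence `d : Fin n → ℕ` is graphic if it is realized by a simple graph on `Fin n`. -/
def IsGraphic {n : ℕ} (d : Fin n → ℕ) : Prop :=
  ∃ G : SimpleGraph (Fin n), ∀ v, (G.neighborSet v).ncard = d v

theorem Set.ncard_sdiff_eq_ncard_sdiff_add {α : Type*} {s t : Set α} {k : ℕ}
    (h : t.ncard + k = s.ncard) (hs : s.Finite := by toFinite_tac)
    (ht : t.Finite := by toFinite_tac) : (s \ t).ncard = (t \ s).ncard + k := by
  have h₁ := Set.ncard_sdiff_add_ncard s t hs ht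
  have h₂ := Set.ncard_sdiff_add_ncard t s ht hs
  rw [Set.union_comm] at h₂
  omega

namespace SimpleGraph

variable {V : Type*} (K : SimpleGraph V) {p q r s : V}

def switch (p q r s : V) : SimpleGraph V :=
  K.deleteEdges {s(p, q), s(r, s)} ⊔ edge p r ⊔ edge q s

lemma switch_adj {x y : V} : (K.switch p q r s).Adj x y ↔
    (K.Adj x y ∧ s(x, y) ≠ s(p, q) ∧ s(x, y) ≠ s(r, s)) ∨
      ((s(p, r) = s(x, y) ∨ s(q, s) = s(x, y)) ∧ x ≠ y) := by
  simp only [switch, sup_adj, deleteEdges_adj, adj_edge, Set.mem_insert_iff,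
    Set.mem_singleton_iff]
  tauto

lemma switch_swap_left (p q r s : V) : K.switch p q r s = K.switch q p s r := by
  rw [switch, switch, Sym2.eq_swap (a := q), Sym2.eq_swap (a := s), sup_right_comm,
    edge_comm q, edge_comm p]

lemma switch_swap_right (p q r s : V) : K.switch p q r s = K.switch r s p q := by
  rw [switch, switch, Set.pair_comm, edge_comm r, edge_comm s]

lemma edgeSet_switch (hpr : p ≠ r) (hqs : q ≠ s) : (K.switch p q r s).edgeSet =
    (K.edgeSet \ {s(p, q), s(r, s)}) ∪ {s(p, r), s(q, s)} := by
  rw [switch, edgeSet_sup, edgeSet_sup, edgeSet_deleteEdges, edgeSet_edge_of_ne hpr,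
    edgeSet_edge_of_ne hqs, Set.union_assoc, Set.singleton_union, Set.insert_eq]

lemma neighborSet_switch_left (hpq : p ≠ q) (hpr : p ≠ r) (hps : p ≠ s) :
    (K.switch p q r s).neighborSet p = insert r (K.neighborSet p \ {q}) := by
  ext w
  simp only [mem_neighborSet, switch_adj, Set.mem_insert_iff, Set.mem_sdiff,
    Set.mem_singleton_iff, Sym2.eq_iff]
  grind

lemma neighborSet_switch_of_ne {v : V} (hp : v ≠ p) (hq : v ≠ q) (hr : v ≠ r) (hs : v ≠ s) :
    (K.switch p q r s).neighborSet v = K.neighborSet v := by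
  ext w
  simp only [mem_neighborSet, switch_adj, Sym2.eq_iff]
  grind

lemma ncard_neighborSet_switch_left (hpq : K.Adj p q) (hpr : ¬K.Adj p r) (hpr' : p ≠ r)
    (hps : p ≠ s) : ((K.switch p q r s).neighborSet p).ncard = (K.neighborSet p).ncard := by
  rw [neighborSet_switch_left K hpq.ne hpr' hps]
  exact Set.ncard_exchange hpr hpq

lemma ncard_neighborSet_switch (hpq : K.Adj p q) (hrs : K.Adj r s) (hpr : ¬K.Adj p r)
    (hqs : ¬K.Adj q s) (hpr' : p ≠ r) (hqs' : q ≠ s) (v : V) :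
    ((K.switch p q r s).neighborSet v).ncard = (K.neighborSet v).ncard := by
  have hps : p ≠ s := by rintro rfl; exact hpr hrs.symm
  have hqr : q ≠ r := by rintro rfl; exact hqs hrs
  obtain rfl | hvp := eq_or_ne v p
  · exact K.ncard_neighborSet_switch_left hpq hpr hpr' hps
  obtain rfl | hvq := eq_or_ne v q
  · rw [switch_swap_left]
    exact K.ncard_neighborSet_switch_left hpq.symm hqs hqs' hqr
  obtain rfl | hvr := eq_or_ne v r
  · rw [switch_swap_right]
    exact K.ncard_neighborSet_switch_left hrs (fun h ↦ hpr h.symm) hpr'.symm hqr.symm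
  obtain rfl | hvs := eq_or_ne v s
  · rw [switch_swap_right, switch_swap_left]
    exact K.ncard_neighborSet_switch_left hrs.symm (fun h ↦ hqs h.symm) hqs'.symm hps.symm
  rw [K.neighborSet_switch_of_ne hvp hvq hvr hvs]

def IsMinimalPair (G H : SimpleGraph V) : Prop :=
  ∀ G' H' : SimpleGraph V, (∀ v, (G'.neighborSet v).ncard = (G.neighborSet v).ncard) →
    (∀ v, (H'.neighborSet v).ncard = (H.neighborSet v).ncard) →
    (H \ G).edgeSet.ncard ≤ (H' \ G').edgeSet.ncard

lemma exists_isMinimalPair (G H : SimpleGraph V) :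
    ∃ G' H' : SimpleGraph V, (∀ v, (G'.neighborSet v).ncard = (G.neighborSet v).ncard) ∧
      (∀ v, (H'.neighborSet v).ncard = (H.neighborSet v).ncard) ∧ IsMinimalPair G' H' := by
  classical
  have hP : ∃ m, ∃ G' H' : SimpleGraph V,
      (∀ v, (G'.neighborSet v).ncard = (G.neighborSet v).ncard) ∧
      (∀ v, (H'.neighborSet v).ncard = (H.neighborSet v).ncard) ∧
      (H' \ G').edgeSet.ncard = m :=
    ⟨_, G, H, fun _ ↦ rfl, fun _ ↦ rfl, rfl⟩
  obtain ⟨G', H', hG', hH', hm⟩ := Nat.find_spec hP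
  refine ⟨G', H', hG', hH', fun G'' H'' hG'' hH'' ↦ hm ▸ Nat.find_min' hP ?_⟩
  exact ⟨G'', H'', fun v ↦ (hG'' v).trans (hG' v), fun v ↦ (hH'' v).trans (hH' v), rfl⟩

variable [Finite V] {G H : SimpleGraph V} {x y c e : V}

lemma ncard_edgeSet_sdiff_switch_lt (hxy : (H \ G).Adj x y) (hxc : (G \ H).Adj x c)
    (hye : (G \ H).Adj y e) (hce : c ≠ e) :
    (H \ G.switch x c y e).edgeSet.ncard < (H \ G).edgeSet.ncard := by
  have hsub : (H \ G.switch x c y e).edgeSet ⊆ (H \ G).edgeSet \ {s(x, y)} := by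
    rw [edgeSet_sdiff, edgeSet_sdiff, edgeSet_switch G hxy.ne hce]
    simp only [sdiff_adj] at hxc hye
    intro z
    simp only [Set.mem_sdiff, Set.mem_union, Set.mem_insert_iff, Set.mem_singleton_iff]
    rintro ⟨hz, hzG⟩
    refine ⟨⟨hz, fun h ↦ hzG (Or.inl ⟨h, ?_⟩)⟩, fun h ↦ hzG (Or.inr (Or.inl h))⟩
    rintro (rfl | rfl)
    exacts [hxc.2 hz, hye.2 hz]
  exact (Set.ncard_le_ncard hsub).trans_lt (Set.ncard_sdiff_singleton_lt_of_mem hxy)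

lemma ncard_edgeSet_switch_sdiff_lt (hxy : (H \ G).Adj x y) (hce : H.Adj c e)
    (hxc : (G \ H).Adj x c) (hye : y ≠ e) (h : G.Adj y e ∨ ¬G.Adj c e) :
    (H.switch x y c e \ G).edgeSet.ncard < (H \ G).edgeSet.ncard := by
  rw [edgeSet_sdiff, edgeSet_sdiff, edgeSet_switch H hxc.1.ne hye]
  set B := H.edgeSet \ G.edgeSet
  have hlt : (B \ {s(x, y)}).ncard < B.ncard :=
    Set.ncard_sdiff_singleton_lt_of_mem (show s(x, y) ∈ B from hxy)
  rcases h with hyeG | hceG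
  · refine (Set.ncard_le_ncard (t := B \ {s(x, y)}) fun z ↦ ?_).trans_lt hlt
    simp only [B, Set.mem_sdiff, Set.mem_union, Set.mem_insert_iff, Set.mem_singleton_iff]
    rintro ⟨(⟨hz, hzne⟩ | rfl | rfl), hzG⟩
    · exact ⟨⟨hz, hzG⟩, fun h ↦ hzne (Or.inl h)⟩
    · exact absurd hxc.1 hzG
    · exact absurd hyeG hzG
  · have hceB : s(c, e) ∈ B \ {s(x, y)} := by
      refine ⟨⟨hce, hceG⟩, fun h ↦ hxc.2 ?_⟩
      rcases Sym2.eq_iff.mp h with ⟨rfl, rfl⟩ | ⟨rfl, rfl⟩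
      exacts [(hxc.1.ne rfl).elim, hxy.1]
    calc _ ≤ (insert s(y, e) ((B \ {s(x, y)}) \ {s(c, e)})).ncard := by
          refine Set.ncard_le_ncard fun z ↦ ?_
          simp only [B, Set.mem_sdiff, Set.mem_union, Set.mem_insert_iff, Set.mem_singleton_iff]
          rintro ⟨(⟨hz, hzne⟩ | rfl | rfl), hzG⟩
          · exact Or.inr ⟨⟨⟨hz, hzG⟩, fun h ↦ hzne (Or.inl h)⟩, fun h ↦ hzne (Or.inr h)⟩
          · exact absurd hxc.1 hzG
          · exact Or.inl rfl
      _ ≤ ((B \ {s(x, y)}) \ {s(c, e)}).ncard + 1 := Set.ncard_insert_le _ _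
      _ = (B \ {s(x, y)}).ncard := Set.ncard_sdiff_singleton_add_one hceB
      _ < B.ncard := hlt

namespace IsMinimalPair

variable {f z : V}

lemma sdiff_adj_of_sdiff_neighbors (hGH : IsMinimalPair G H) (hxy : (H \ G).Adj x y)
    (hxc : (G \ H).Adj x c) (hye : (G \ H).Adj y e) (hce : c ≠ e) : (G \ H).Adj c e := by
  refine ⟨?_, fun hceH ↦ ?_⟩
  · by_contra hceG
    exact (hGH _ H (ncard_neighborSet_switch G hxc.1 hye.1 hxy.2 hceG hxy.1.ne hce)
      fun _ ↦ rfl).not_gt (ncard_edgeSet_sdiff_switch_lt hxy hxc hye hce)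
  · exact (hGH G _ (fun _ ↦ rfl) (ncard_neighborSet_switch H hxy.1 hceH hxc.2 hye.2 hxc.1.ne
      hye.1.ne)).not_gt (ncard_edgeSet_switch_sdiff_lt hxy hceH hxc hye.1.ne (Or.inl hye.1))

lemma adj_of_sdiff_path (hGH : IsMinimalPair G H) (hxy : (H \ G).Adj x y)
    (hxc : (G \ H).Adj x c) (hcf : (H \ G).Adj c f) (hyf : y ≠ f) : H.Adj y f := by
  by_contra hyfH
  exact (hGH G _ (fun _ ↦ rfl) (ncard_neighborSet_switch H hxy.1 hcf.1 hxc.2 hyfH hxc.1.ne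
      hyf)).not_gt (ncard_edgeSet_switch_sdiff_lt hxy hcf.1 hxc hyf (Or.inr hcf.2))

lemma neighborSet_sdiff_eq_insert_of_isMax (hGH : IsMinimalPair G H) {k : ℕ}
    (hk : ∀ v, (H.neighborSet v).ncard + k = (G.neighborSet v).ncard)
    (hmax : ∀ v, ((H \ G).neighborSet v).ncard ≤ ((H \ G).neighborSet x).ncard)
    (hxy : (H \ G).Adj x y) (hyz : (G \ H).Adj y z) :
    (G \ H).Adj x z ∧ ((H \ G).neighborSet z).ncard = ((H \ G).neighborSet x).ncard ∧
      (G \ H).neighborSet z = insert y ((G \ H).neighborSet x \ {z}) := by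
  have hcard v : ((G \ H).neighborSet v).ncard = ((H \ G).neighborSet v).ncard + k :=
    Set.ncard_sdiff_eq_ncard_sdiff_add (hk v)
  have hsub : insert y ((G \ H).neighborSet x \ {z}) ⊆ (G \ H).neighborSet z := by
    rintro w (rfl | ⟨hxw, hwz⟩)
    · exact hyz.symm
    · exact (hGH.sdiff_adj_of_sdiff_neighbors hxy hxw hyz hwz).symm
  have hy : y ∉ (G \ H).neighborSet x := fun h ↦ hxy.2 h.1
  -- `|D z| ≥ |D x| + 1 - [z ∈ D x]` with `D = (G \ H).neighborSet`, while `|D v| - k` is maximal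
  -- at `x`: so `z ∈ D x` and `hsub` is an equality.
  have hxz : z ∈ (G \ H).neighborSet x := by
    by_contra h
    have hle := Set.ncard_le_ncard hsub
    rw [Set.sdiff_singleton_eq_self h, Set.ncard_insert_of_notMem hy, hcard, hcard] at hle
    exact absurd (hmax z) (by omega)
  have hle := Set.ncard_le_ncard hsub
  rw [Set.ncard_exchange hy hxz, hcard, hcard] at hle
  have htz := le_antisymm (hmax z) (by omega)
  refine ⟨hxz, htz, (Set.eq_of_subset_of_ncard_le hsub ?_).symm⟩
  rw [Set.ncard_exchange hy hxz, hcard, hcard, htz]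

lemma le (hGH : IsMinimalPair G H) {k : ℕ}
    (hk : ∀ v, (H.neighborSet v).ncard + k = (G.neighborSet v).ncard) : H ≤ G := by
  intro u w huw
  by_contra huwG
  have hcard v : ((G \ H).neighborSet v).ncard = ((H \ G).neighborSet v).ncard + k :=
    Set.ncard_sdiff_eq_ncard_sdiff_add (hk v)
  have hpos {v v' : V} (h : (H \ G).Adj v v') : 0 < ((H \ G).neighborSet v').ncard :=
    (Set.ncard_pos (Set.toFinite _)).mpr ⟨v, h.symm⟩
  have : Nonempty V := ⟨u⟩
  obtain ⟨a, hmax⟩ := Finite.exists_max fun v ↦ ((H \ G).neighborSet v).ncard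
  have ha : 0 < ((H \ G).neighborSet a).ncard :=
    (hpos (show (H \ G).Adj w u from ⟨huw.symm, fun h ↦ huwG h.symm⟩)).trans_le (hmax u)
  obtain ⟨b, hab⟩ : ((H \ G).neighborSet a).Nonempty := Set.nonempty_of_ncard_ne_zero ha.ne'
  obtain ⟨d, hbd⟩ : ((G \ H).neighborSet b).Nonempty :=
    Set.nonempty_of_ncard_ne_zero (by rw [hcard]; have := hpos hab; omega)
  obtain ⟨had, hda, hDd⟩ := hGH.neighborSet_sdiff_eq_insert_of_isMax hk hmax hab hbd
  obtain ⟨f, hdf⟩ : ((H \ G).neighborSet d).Nonempty :=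
    Set.nonempty_of_ncard_ne_zero (hda ▸ ha.ne')
  obtain ⟨y, hfy⟩ : ((G \ H).neighborSet f).Nonempty :=
    Set.nonempty_of_ncard_ne_zero (by rw [hcard]; have := hpos hdf; omega)
  obtain ⟨hdy, -, hDy⟩ := hGH.neighborSet_sdiff_eq_insert_of_isMax hk (hda ▸ hmax) hdf hfy
  have hyf : (G \ H).Adj y f := hfy.symm
  have hdy : y ∈ (G \ H).neighborSet d := hdy
  rw [hDd] at hdy
  rcases hdy with rfl | ⟨hay, hyd⟩
  · exact hyf.2 (hGH.adj_of_sdiff_path hab had hdf hyf.ne)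
  · have hdy : d ∈ (G \ H).neighborSet y :=
      hGH.sdiff_adj_of_sdiff_neighbors hab hay hbd hyd
    rw [hDy] at hdy
    rcases hdy with rfl | ⟨hdd, -⟩
    exacts [hdf.1.ne rfl, hdd.1.ne rfl]

end IsMinimalPair

theorem exists_le_of_ncard_neighborSet_add_eq {k : ℕ} (G H : SimpleGraph V)
    (hk : ∀ v, (H.neighborSet v).ncard + k = (G.neighborSet v).ncard) :
    ∃ G' H' : SimpleGraph V, (∀ v, (G'.neighborSet v).ncard = (G.neighborSet v).ncard) ∧
      (∀ v, (H'.neighborSet v).ncard = (H.neighborSet v).ncard) ∧ H' ≤ G' := by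
  obtain ⟨G', H', hG', hH', hmin⟩ := exists_isMinimalPair G H
  exact ⟨G', H', hG', hH', hmin.le fun v ↦ by rw [hG', hH', hk]⟩

end SimpleGraph

/-- Kundu's theorem: a graphic sequence `π` has a realization containing a
`k`-factor if and only if `π - k` is graphic. -/
theorem stmt7 {n : ℕ} (d : Fin n → ℕ) (k : ℕ) (hd : IsGraphic d) (hk : ∀ i, k ≤ d i) :
    (∃ G : SimpleGraph (Fin n), (∀ v, (G.neighborSet v).ncard = d v) ∧
        ∃ H : SimpleGraph (Fin n), H ≤ G ∧ ∀ v, (H.neighborSet v).ncard = k) ↔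
    IsGraphic (fun i => d i - k) := by
  constructor
  · rintro ⟨G, hG, H, hHG, hH⟩
    refine ⟨G \ H, fun v ↦ ?_⟩
    rw [neighborSet_sdiff, Set.ncard_sdiff (neighborSet_mono hHG v), hG, hH]
  · rintro ⟨F, hF⟩
    obtain ⟨G, hG⟩ := hd
    obtain ⟨G', H', hG', hH', hle⟩ := exists_le_of_ncard_neighborSet_add_eq (k := k) G F
      fun v ↦ by rw [hF, hG, Nat.sub_add_cancel (hk v)]
    refine ⟨G', fun v ↦ (hG' v).trans (hG v), G' \ H', sdiff_le, fun v ↦ ?_⟩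
    rw [neighborSet_sdiff, Set.ncard_sdiff (neighborSet_mono hle v), hG', hH', hG, hF,
      Nat.sub_sub_self (hk v)]
end
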